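/- (Norm-equivalence transfer from weighted to standard GMRES; the core of Lemma 2.4 of the paper.) Let D ∈ ℂ^{N×N} be Hermitian positive definite and suppose there are constants α, β > 0 with α‖v‖₂ ≤ ‖v‖_D ≤ β‖v‖₂ for all v ∈ ℂ^N. Let C ∈ ℂ^{N×N} satisfy ‖I − C‖_D ≤ 1/2. Then for every d ∈ ℂ^N, every initial guess x⁰ with initial residual r⁰ := C x⁰ − d, and every m ∈ ℕ, the m-th Euclidean (standard) GMRES residual satisfies min{ ‖C x − d‖₂ : x ∈ x⁰ + K^m(C, r⁰) } ≤ (β/α) · (2√2/3)^m · ‖r⁰‖₂. -/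

import Mathlib

/-!
The `m`-th Richardson iterate `x0 - ∑_{j<m} (1 - C)^j r0` lies in `x0 + K^m(C, r0)` and its
residual is `(1 - C)^m r0`. As `‖1 - C‖_D ≤ 1/2`, that residual has `D`-norm at most
`2^{-m} ‖r0‖_D`, and the norm equivalence turns this into `(β/α) 2^{-m} ‖r0‖₂`, which is better
than the claim because `1/2 < 2√2/3`.

The norm equivalence is also what makes `‖1 - C‖_D` meaningful: it makes `‖·‖_D` positive
definite and the ratios `‖A x‖_D / ‖x‖_D` bounded, so the `sSup` in `opNormW` is not a junk value.
-/

open scoped ComplexOrder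

noncomputable section

/-- The Euclidean inner product on `ℂ^N`, linear in the first argument. -/
def inner2 {N : ℕ} (x y : Fin N → ℂ) : ℂ := ∑ i, x i * (starRingEnd ℂ) (y i)

/-- The weighted inner product `(x,y)_D := (D x, y)₂`. -/
def innerW {N : ℕ} (D : Matrix (Fin N) (Fin N) ℂ) (x y : Fin N → ℂ) : ℂ :=
  inner2 (D.mulVec x) y

/-- The weighted norm `‖x‖_D := (x,x)_D^{1/2}`. -/
def normW {N : ℕ} (D : Matrix (Fin N) (Fin N) ℂ) (x : Fin N → ℂ) : ℝ :=
  Real.sqrt (innerW D x x).re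

/-- The matrix norm induced by the weighted norm `‖·‖_D`. -/
def opNormW {N : ℕ} (D C : Matrix (Fin N) (Fin N) ℂ) : ℝ :=
  sSup {t : ℝ | ∃ x : Fin N → ℂ, x ≠ 0 ∧ t = normW D (C.mulVec x) / normW D x}

/-- The numerical range `W_D(C) := { (C x, x)_D : ‖x‖_D = 1 }`. -/
def numRange {N : ℕ} (D C : Matrix (Fin N) (Fin N) ℂ) : Set ℂ :=
  {z | ∃ x : Fin N → ℂ, normW D x = 1 ∧ z = innerW D (C.mulVec x) x}

/-- The `m`-th Krylov space `K^m(C,r) := span{C^j r : 0 ≤ j ≤ m-1}`. -/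
def krylov {N : ℕ} (C : Matrix (Fin N) (Fin N) ℂ) (r : Fin N → ℂ) (m : ℕ) :
    Submodule ℂ (Fin N → ℂ) :=
  Submodule.span ℂ {v | ∃ j < m, v = (C ^ j).mulVec r}

open Matrix

lemma normW_nonneg {N : ℕ} (D : Matrix (Fin N) (Fin N) ℂ) (x : Fin N → ℂ) : 0 ≤ normW D x :=
  Real.sqrt_nonneg _

lemma normW_zero {N : ℕ} (D : Matrix (Fin N) (Fin N) ℂ) : normW D 0 = 0 := by
  simp [normW, innerW, inner2]

lemma normW_one_eq_norm {N : ℕ} (v : Fin N → ℂ) : normW 1 v = ‖WithLp.toLp 2 v‖ := by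
  rw [EuclideanSpace.norm_eq, normW, innerW, inner2, one_mulVec]
  congr 1
  simp only [Complex.mul_conj, Complex.re_sum, Complex.normSq_eq_norm_sq]
  norm_cast

lemma normW_one_pos {N : ℕ} {v : Fin N → ℂ} (hv : v ≠ 0) : 0 < normW 1 v := by
  rw [normW_one_eq_norm, norm_pos_iff]
  exact (WithLp.toLp_eq_zero 2).not.mpr hv

lemma normW_one_mulVec_le {N : ℕ} (A : Matrix (Fin N) (Fin N) ℂ) (v : Fin N → ℂ) :
    normW 1 (A *ᵥ v) ≤ ‖toEuclideanCLM (𝕜 := ℂ) A‖ * normW 1 v := by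
  rw [normW_one_eq_norm, normW_one_eq_norm, ← toEuclideanCLM_toLp]
  exact (toEuclideanCLM (𝕜 := ℂ) A).le_opNorm _

section NormEquivalence

variable {N : ℕ} {D : Matrix (Fin N) (Fin N) ℂ} {α β : ℝ}

lemma normW_pos (hα : 0 < α) (hlow : ∀ v : Fin N → ℂ, α * normW 1 v ≤ normW D v)
    {v : Fin N → ℂ} (hv : v ≠ 0) : 0 < normW D v :=
  (mul_pos hα (normW_one_pos hv)).trans_le (hlow v)

lemma bddAbove_normW_ratio (hα : 0 < α) (hβ : 0 ≤ β)
    (hlow : ∀ v : Fin N → ℂ, α * normW 1 v ≤ normW D v)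
    (hhigh : ∀ v : Fin N → ℂ, normW D v ≤ β * normW 1 v) (A : Matrix (Fin N) (Fin N) ℂ) :
    BddAbove {t : ℝ | ∃ x : Fin N → ℂ, x ≠ 0 ∧ t = normW D (A *ᵥ x) / normW D x} := by
  refine ⟨β * ‖toEuclideanCLM (𝕜 := ℂ) A‖ / α, ?_⟩
  rintro t ⟨x, hx, rfl⟩
  rw [div_le_iff₀ (normW_pos hα hlow hx)]
  calc normW D (A *ᵥ x) ≤ β * normW 1 (A *ᵥ x) := hhigh _
    _ ≤ β * (‖toEuclideanCLM (𝕜 := ℂ) A‖ * normW 1 x) := by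
      gcongr; exact normW_one_mulVec_le A x
    _ ≤ β * (‖toEuclideanCLM (𝕜 := ℂ) A‖ * (normW D x / α)) := by
      gcongr; rw [le_div_iff₀ hα, mul_comm]; exact hlow x
    _ = _ := by ring

lemma normW_mulVec_le_opNormW_mul (hα : 0 < α) (hβ : 0 ≤ β)
    (hlow : ∀ v : Fin N → ℂ, α * normW 1 v ≤ normW D v)
    (hhigh : ∀ v : Fin N → ℂ, normW D v ≤ β * normW 1 v)
    (A : Matrix (Fin N) (Fin N) ℂ) (v : Fin N → ℂ) :
    normW D (A *ᵥ v) ≤ opNormW D A * normW D v := by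
  rcases eq_or_ne v 0 with rfl | hv
  · simp [normW_zero]
  rw [← div_le_iff₀ (normW_pos hα hlow hv)]
  exact le_csSup (bddAbove_normW_ratio hα hβ hlow hhigh A) ⟨v, hv, rfl⟩

end NormEquivalence

lemma normW_pow_mulVec_le {N : ℕ} {D A : Matrix (Fin N) (Fin N) ℂ} {c : ℝ} (hc : 0 ≤ c)
    (hA : ∀ v, normW D (A *ᵥ v) ≤ c * normW D v) (m : ℕ) (v : Fin N → ℂ) :
    normW D ((A ^ m) *ᵥ v) ≤ c ^ m * normW D v := by
  induction m with
  | zero => simp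
  | succ m ih =>
    calc normW D ((A ^ (m + 1)) *ᵥ v) = normW D (A *ᵥ ((A ^ m) *ᵥ v)) := by
          rw [pow_succ', mulVec_mulVec]
      _ ≤ c * (c ^ m * normW D v) := (hA _).trans (by gcongr)
      _ = c ^ (m + 1) * normW D v := by ring

section Krylov

variable {N : ℕ} (C : Matrix (Fin N) (Fin N) ℂ) (r : Fin N → ℂ)

lemma krylov_mono {m m' : ℕ} (h : m ≤ m') : krylov C r m ≤ krylov C r m' :=
  Submodule.span_mono fun _ ⟨j, hj, hv⟩ => ⟨j, hj.trans_le h, hv⟩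

lemma mulVec_mem_krylov_succ {n : ℕ} {v : Fin N → ℂ} (hv : v ∈ krylov C r n) :
    C *ᵥ v ∈ krylov C r (n + 1) := by
  have hle : (krylov C r n).map (mulVecLin C) ≤ krylov C r (n + 1) := by
    rw [krylov, Submodule.map_span, Submodule.span_le]
    rintro _ ⟨_, ⟨j, hj, rfl⟩, rfl⟩
    exact Submodule.subset_span ⟨j + 1, by omega, by rw [pow_succ', ← mulVec_mulVec]; rfl⟩
  exact hle ⟨v, hv, rfl⟩

lemma one_sub_pow_mulVec_mem_krylov (j : ℕ) : ((1 - C) ^ j) *ᵥ r ∈ krylov C r (j + 1) := by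
  induction j with
  | zero => exact Submodule.subset_span ⟨0, by omega, rfl⟩
  | succ j ih =>
    have hsplit : ((1 - C) ^ (j + 1)) *ᵥ r = (1 - C) ^ j *ᵥ r - C *ᵥ ((1 - C) ^ j *ᵥ r) := by
      rw [pow_succ', ← mulVec_mulVec, sub_mulVec, one_mulVec]
    rw [hsplit]
    exact sub_mem (krylov_mono C r (j + 1).le_succ ih) (mulVec_mem_krylov_succ C r ih)

lemma exists_mem_krylov_residual_eq_pow (x0 d : Fin N → ℂ) (m : ℕ) :
    ∃ x, x - x0 ∈ krylov C (C *ᵥ x0 - d) m ∧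
      C *ᵥ x - d = ((1 - C) ^ m) *ᵥ (C *ᵥ x0 - d) := by
  set S := ∑ j ∈ Finset.range m, (1 - C) ^ j
  refine ⟨x0 - S *ᵥ (C *ᵥ x0 - d), ?_, ?_⟩
  · rw [sub_sub_cancel_left, sum_mulVec]
    refine neg_mem (Submodule.sum_mem _ fun j hj => ?_)
    exact krylov_mono C _ (Finset.mem_range.1 hj) (one_sub_pow_mulVec_mem_krylov C _ j)
  · have hgeom : C * S = 1 - (1 - C) ^ m := by simpa using mul_neg_geom_sum (1 - C) m
    rw [mulVec_sub, mulVec_mulVec, hgeom, sub_mulVec, one_mulVec]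
    abel

end Krylov

lemma one_half_le_two_sqrt_two_div_three : (1 : ℝ) / 2 ≤ 2 * Real.sqrt 2 / 3 := by
  have : (1 : ℝ) ≤ Real.sqrt 2 := Real.one_le_sqrt.mpr (by norm_num)
  linarith

theorem norm_equivalence_transfer_general {N : ℕ}
    (D C : Matrix (Fin N) (Fin N) ℂ)
    (α β : ℝ) (hα : 0 < α) (hβ : 0 < β)
    (hlow : ∀ v : Fin N → ℂ, α * normW 1 v ≤ normW D v)
    (hhigh : ∀ v : Fin N → ℂ, normW D v ≤ β * normW 1 v)
    (h : opNormW D (1 - C) ≤ 1 / 2) :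
    ∀ (d x0 : Fin N → ℂ) (m : ℕ),
      sInf {t : ℝ | ∃ x : Fin N → ℂ,
          x - x0 ∈ krylov C (C.mulVec x0 - d) m ∧ t = normW 1 (C.mulVec x - d)} ≤
        (β / α) * (2 * Real.sqrt 2 / 3) ^ m * normW 1 (C.mulVec x0 - d) := by
  intro d x0 m
  set r0 := C *ᵥ x0 - d
  obtain ⟨x, hxK, hres⟩ := exists_mem_krylov_residual_eq_pow C x0 d m
  have hcontr (v : Fin N → ℂ) : normW D ((1 - C) *ᵥ v) ≤ 1 / 2 * normW D v :=
    (normW_mulVec_le_opNormW_mul hα hβ.le hlow hhigh _ v).trans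
      (by gcongr; exact normW_nonneg _ _)
  have hbdd : BddBelow {t : ℝ | ∃ x : Fin N → ℂ, x - x0 ∈ krylov C r0 m ∧
      t = normW 1 (C *ᵥ x - d)} := ⟨0, by rintro _ ⟨y, -, rfl⟩; exact normW_nonneg _ _⟩
  calc _ ≤ normW 1 (C *ᵥ x - d) := csInf_le hbdd ⟨x, hxK, rfl⟩
    _ ≤ normW D ((1 - C) ^ m *ᵥ r0) / α := by rw [hres, le_div_iff₀ hα, mul_comm]; exact hlow _
    _ ≤ (1 / 2) ^ m * (β * normW 1 r0) / α := by
      gcongr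
      exact (normW_pow_mulVec_le (by norm_num) hcontr m r0).trans (by gcongr; exact hhigh r0)
    _ = β / α * (1 / 2) ^ m * normW 1 r0 := by ring
    _ ≤ β / α * (2 * Real.sqrt 2 / 3) ^ m * normW 1 r0 := by
      gcongr β / α * ?_ ^ m * _
      · exact normW_nonneg _ _
      · exact one_half_le_two_sqrt_two_div_three

/-- **Norm-equivalence transfer from weighted to standard GMRES**
(core of Lemma 2.4). Here `normW 1` is the Euclidean norm. -/
theorem norm_equivalence_transfer {N : ℕ} (hN : 1 ≤ N)
    (D C : Matrix (Fin N) (Fin N) ℂ) (hD : D.PosDef)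
    (α β : ℝ) (hα : 0 < α) (hβ : 0 < β)
    (hlow : ∀ v : Fin N → ℂ, α * normW 1 v ≤ normW D v)
    (hhigh : ∀ v : Fin N → ℂ, normW D v ≤ β * normW 1 v)
    (h : opNormW D (1 - C) ≤ 1 / 2) :
    ∀ (d x0 : Fin N → ℂ) (m : ℕ),
      sInf {t : ℝ | ∃ x : Fin N → ℂ,
          x - x0 ∈ krylov C (C.mulVec x0 - d) m ∧ t = normW 1 (C.mulVec x - d)} ≤
        (β / α) * (2 * Real.sqrt 2 / 3) ^ m * normW 1 (C.mulVec x0 - d) :=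
  norm_equivalence_transfer_general D C α β hα hβ hlow hhigh h
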